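/- arXiv:2601.16702 — 6 statements merged into one kernel-verified Lean document; each statement's English description precedes it below -/
import Mathlib

section
/- Let S be a nonempty finite set, Λ : S → ℝ with Λ(s) > 0 for all s, and K ≥ |S|. Consider the greedy algorithm that starts with n(s) = 1 for all s ∈ S and, at each of the remaining K − |S| iterations, increments n(s*) for some s* maximizing Λ(s)/n(s). Then the resulting allocation n : S → ℕ satisfies Σ_s n(s) = K, n(s) ≥ 1 for all s, and minimizes max_{s∈S} Λ(s)/n(s) over all m : S → ℕ with m(s) ≥ 1 for all s and Σ_s m(s) = K. -/
/-- Greedy vehicle allocation: starting from one vehicle per station and repeatedly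
adding a vehicle to a station maximizing the risk per vehicle, the final allocation
is feasible and minimizes the maximal risk per vehicle. -/
theorem stmt0 {S : Type*} [Fintype S] [DecidableEq S] [Nonempty S] (Λ : S → ℝ) (hΛ : ∀ s, 0 < Λ s)
    (K : ℕ) (hK : Fintype.card S ≤ K)
    (n : ℕ → S → ℕ)
    (h0 : ∀ s, n 0 s = 1)
    (hstep : ∀ k < K - Fintype.card S, ∃ sstar : S,
      (∀ s : S, Λ s / (n k s : ℝ) ≤ Λ sstar / (n k sstar : ℝ)) ∧
      n (k + 1) = Function.update (n k) sstar (n k sstar + 1)) :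
    (∑ s, n (K - Fintype.card S) s = K) ∧
    (∀ s, 1 ≤ n (K - Fintype.card S) s) ∧
    (∀ m : S → ℕ, (∀ s, 1 ≤ m s) → ∑ s, m s = K →
      Finset.univ.sup' Finset.univ_nonempty
          (fun s => Λ s / (n (K - Fintype.card S) s : ℝ)) ≤
      Finset.univ.sup' Finset.univ_nonempty (fun s => Λ s / (m s : ℝ))) := by
  set N := K - Fintype.card S with hNdef
  have key : ∀ k, k ≤ N → (∑ s, n k s = Fintype.card S + k) ∧ (∀ s, 1 ≤ n k s) ∧
      (∀ s t, 2 ≤ n k s → Λ t / (n k t : ℝ) ≤ Λ s / ((n k s : ℝ) - 1)) := by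
    intro k
    induction k with
    | zero =>
      intro _
      refine ⟨by simp [h0], fun s => by simp [h0], fun s t h2 => by simp [h0 s] at h2⟩
    | succ k ih =>
      intro hk
      obtain ⟨hsum, hone, hinv⟩ := ih (Nat.le_of_succ_le hk)
      obtain ⟨sstar, hmax, hupd⟩ := hstep k (Nat.lt_of_succ_le hk)
      have hone' : ∀ s, 1 ≤ n (k + 1) s := by
        intro s
        rw [hupd, Function.update_apply]
        split
        · omega
        · exact hone s
      have hsum' : ∑ s, n (k + 1) s = Fintype.card S + (k + 1) := by
        rw [hupd, Finset.sum_update_of_mem (Finset.mem_univ _)]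
        rw [Finset.sdiff_singleton_eq_erase]
        have := Finset.add_sum_erase Finset.univ (n k) (Finset.mem_univ sstar)
        omega
      refine ⟨hsum', hone', ?_⟩
      intro s t h2
      have hpos : ∀ u, (0 : ℝ) < n k u := by
        intro u; exact_mod_cast hone u
      have hmono : Λ t / (n (k + 1) t : ℝ) ≤ Λ t / (n k t : ℝ) := by
        have h1 : (n k t : ℝ) ≤ (n (k + 1) t : ℝ) := by
          rw [hupd, Function.update_apply]
          split <;> simp_all
        gcongr
        · exact (hΛ t).le
        · exact hpos t
      by_cases hs : s = sstar
      · subst hs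
        have hden : ((n (k + 1) s : ℝ) - 1) = (n k s : ℝ) := by
          rw [hupd, Function.update_self]; push_cast; ring
        rw [hden]
        exact hmono.trans (hmax t)
      · have hns : n (k + 1) s = n k s := by
          rw [hupd, Function.update_of_ne hs]
        rw [hns] at h2 ⊢
        exact hmono.trans (hinv s t h2)
  obtain ⟨hsum, hone, hinv⟩ := key N le_rfl
  have hsumK : ∑ s, n N s = K := by omega
  refine ⟨hsumK, hone, ?_⟩
  intro m hm hmsum
  by_contra hcon
  push_neg at hcon
  obtain ⟨s0, -, hs0⟩ := Finset.exists_mem_eq_sup' Finset.univ_nonempty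
    (fun s => Λ s / (n N s : ℝ))
  have hlt : ∀ s, Λ s / (m s : ℝ) < Λ s0 / (n N s0 : ℝ) := by
    intro s
    calc Λ s / (m s : ℝ) ≤ _ := Finset.le_sup' (fun s => Λ s / (m s : ℝ)) (Finset.mem_univ s)
    _ < _ := hs0 ▸ hcon
  have hmpos : ∀ s, (0 : ℝ) < m s := by intro s; exact_mod_cast hm s
  have hnpos : ∀ s, (0 : ℝ) < n N s := by intro s; exact_mod_cast hone s
  have hle : ∀ s, n N s ≤ m s := by
    intro s
    by_contra hc
    push_neg at hc
    have h2 : 2 ≤ n N s := by have := hm s; omega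
    have h1 : (m s : ℝ) ≤ (n N s : ℝ) - 1 := by
      have : (m s : ℝ) + 1 ≤ (n N s : ℝ) := by exact_mod_cast hc
      linarith
    have h3 : Λ s / ((n N s : ℝ) - 1) ≤ Λ s / (m s : ℝ) := by
      gcongr
      · exact (hΛ s).le
      · exact hmpos s
    have := (hinv s s0 h2).trans h3
    exact absurd (hlt s) (not_lt.2 this)
  have hlt0 : n N s0 < m s0 := by
    by_contra hc
    push_neg at hc
    have h1 : (m s0 : ℝ) ≤ (n N s0 : ℝ) := by exact_mod_cast hc
    have : Λ s0 / (n N s0 : ℝ) ≤ Λ s0 / (m s0 : ℝ) := by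
      gcongr
      · exact (hΛ s0).le
      · exact hmpos s0
    linarith [hlt s0]
  have : (∑ s, n N s) < ∑ s, m s :=
    Finset.sum_lt_sum (fun s _ => hle s) ⟨s0, Finset.mem_univ _, hlt0⟩
  omega
end

section
/- Let S be a finite set, Λ : S → ℝ with Λ(s) > 0 for all s, and let n, n' : S → ℕ be allocations with n(s), n'(s) ≥ 1 for all s and Σ_s n(s) = Σ_s n'(s). Suppose there exist s, s' ∈ S with n(s) > n'(s), n(s') < n'(s'), and Λ(s')/n(s') ≤ Λ(s)/(n(s) − 1). Define ñ by ñ(s) = n'(s) + 1, ñ(s') = n'(s') − 1, and ñ(t) = n'(t) otherwise. Then max_{t∈S} Λ(t)/ñ(t) ≤ max_{t∈S} Λ(t)/n'(t). -/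
/-- Exchange step for vehicle allocation: moving one resource of a competing
allocation `n'` from `s'` to `s` does not increase the maximal average risk. -/
theorem stmt1 {S : Type*} [Fintype S] [DecidableEq S] (Λ : S → ℝ) (hΛ : ∀ s, 0 < Λ s)
    (n n' : S → ℕ) (hn : ∀ s, 1 ≤ n s) (hn' : ∀ s, 1 ≤ n' s)
    (hsum : ∑ s, n s = ∑ s, n' s)
    (s s' : S) (hs : n' s < n s) (hs' : n s' < n' s')
    (hineq : Λ s' / (n s' : ℝ) ≤ Λ s / ((n s - 1 : ℕ) : ℝ)) :
    Finset.univ.sup' ⟨s, Finset.mem_univ s⟩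
        (fun t => Λ t /
          ((Function.update (Function.update n' s (n' s + 1)) s' (n' s' - 1)) t : ℝ)) ≤
    Finset.univ.sup' ⟨s, Finset.mem_univ s⟩ (fun t => Λ t / (n' t : ℝ)) := by
  have hne : s ≠ s' := by intro h; subst h; omega
  have hmax : ∀ u : S, Λ u / (n' u : ℝ) ≤
      Finset.univ.sup' ⟨s, Finset.mem_univ s⟩ (fun t => Λ t / (n' t : ℝ)) :=
    fun u => Finset.le_sup' (f := fun t => Λ t / (n' t : ℝ)) (Finset.mem_univ u)
  apply Finset.sup'_le
  intro t _
  by_cases ht : t = s'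
  · subst ht
    rw [Function.update_self]
    have h1 : Λ t / ((n' t - 1 : ℕ) : ℝ) ≤ Λ t / (n t : ℝ) := by
      gcongr
      · exact (hΛ t).le
      · exact_mod_cast hn t
      · exact_mod_cast Nat.le_sub_one_of_lt hs'
    have h2 : Λ s / ((n s - 1 : ℕ) : ℝ) ≤ Λ s / (n' s : ℝ) := by
      gcongr
      · exact (hΛ s).le
      · exact_mod_cast hn' s
      · exact_mod_cast Nat.le_sub_one_of_lt hs
    exact le_trans (le_trans h1 (le_trans hineq h2)) (hmax s)
  · rw [Function.update_of_ne ht]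
    refine le_trans ?_ (hmax t)
    by_cases hts : t = s
    · subst hts
      rw [Function.update_self]
      gcongr
      · exact (hΛ t).le
      · exact_mod_cast hn' t
      · exact_mod_cast Nat.le_succ _
    · rw [Function.update_of_ne hts]
end

section
/- Let S be a finite set and, for each s ∈ S, let f_s : ℕ → ℝ be non-decreasing and non-negative. Define g_s(i) = Σ_{j=0}^{i} f_s(j). Let K ∈ ℕ. Then any n* : S → ℕ with Σ_s n*(s) = K that minimizes Σ_s g_s(n(s)) over all n : S → ℕ with Σ_s n(s) = K also minimizes max_{s∈S} f_s(n(s)) over the same constraint set. -/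
/-- Reduction of the minimax problem to a separable-sum problem via cumulative
sums: a minimizer of the sum of the cumulative sums also minimizes the maximum. -/
theorem stmt3 {S : Type*} [Fintype S] [Nonempty S] (f : S → ℕ → ℝ)
    (hmono : ∀ s, Monotone (f s)) (hpos : ∀ s i, 0 ≤ f s i)
    (g : S → ℕ → ℝ) (hg : ∀ s i, g s i = ∑ j ∈ Finset.range (i + 1), f s j)
    (K : ℕ) (nstar : S → ℕ) (hsum : ∑ s, nstar s = K)
    (hopt : ∀ m : S → ℕ, ∑ s, m s = K → ∑ s, g s (nstar s) ≤ ∑ s, g s (m s)) :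
    ∀ m : S → ℕ, ∑ s, m s = K →
      Finset.univ.sup' Finset.univ_nonempty (fun s => f s (nstar s)) ≤
      Finset.univ.sup' Finset.univ_nonempty (fun s => f s (m s)) := by
  intro m hm
  classical
  by_contra hlt
  push_neg at hlt
  set M := Finset.univ.sup' Finset.univ_nonempty (fun s => f s (m s)) with hM
  obtain ⟨t, -, ht⟩ := Finset.exists_mem_eq_sup' Finset.univ_nonempty
    (fun s => f s (nstar s))
  have htM : M < f t (nstar t) := by rw [ht] at hlt; exact hlt
  have hmM : ∀ s, f s (m s) ≤ M := fun s =>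
    Finset.le_sup' (fun s => f s (m s)) (Finset.mem_univ s)
  -- nstar t > m t
  have htgt : m t < nstar t := by
    by_contra h
    push_neg at h
    exact absurd (le_trans (hmono t h) (hmM t)) (not_le.mpr htM)
  -- exists u with nstar u < m u
  have hsum' : ∑ s, nstar s = ∑ s, m s := by rw [hsum, hm]
  have hex : ∃ u, nstar u < m u := by
    by_contra h
    push_neg at h
    have : ∑ s, m s < ∑ s, nstar s :=
      Finset.sum_lt_sum (fun s _ => h s) ⟨t, Finset.mem_univ t, htgt⟩
    omega
  obtain ⟨u, hu⟩ := hex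
  have htu : t ≠ u := by intro h; rw [h] at htgt; omega
  obtain ⟨b, hb⟩ : ∃ b, nstar t = b + 1 := ⟨nstar t - 1, by omega⟩
  set n' : S → ℕ := Function.update (Function.update nstar t b) u (nstar u + 1)
    with hn'
  have hn't : n' t = b := by
    rw [hn', Function.update_of_ne htu, Function.update_self]
  have hn'u : n' u = nstar u + 1 := by rw [hn', Function.update_self]
  have hn'o : ∀ s, s ≠ t → s ≠ u → n' s = nstar s := by
    intro s h1 h2
    rw [hn', Function.update_of_ne h2, Function.update_of_ne h1]
  have htmem : t ∈ Finset.univ.erase u :=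
    Finset.mem_erase.mpr ⟨htu, Finset.mem_univ t⟩
  have key : ∀ {α : Type} [AddCommMonoid α] (F : S → α),
      ∑ s, F s = F u + (F t + ∑ s ∈ (Finset.univ.erase u).erase t, F s) := by
    intro α _ F
    rw [Finset.add_sum_erase _ F htmem, Finset.add_sum_erase _ F (Finset.mem_univ u)]
  have congr_rest : ∀ {α : Type} [AddCommMonoid α] (F : S → ℕ → α),
      ∑ s ∈ (Finset.univ.erase u).erase t, F s (n' s)
        = ∑ s ∈ (Finset.univ.erase u).erase t, F s (nstar s) := by
    intro α _ F
    refine Finset.sum_congr rfl fun s hs => ?_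
    obtain ⟨h1, h2⟩ := Finset.mem_erase.mp hs
    rw [hn'o s h1 (Finset.mem_erase.mp h2).1]
  -- sum of n'
  have hsum'' : ∑ s, n' s = K := by
    have e1 := key (α := ℕ) (fun s => n' s)
    have e2 := key (α := ℕ) (fun s => nstar s)
    rw [congr_rest (fun _ k => k)] at e1
    omega
  -- g values decrease strictly
  have hgu : g u (nstar u + 1) = g u (nstar u) + f u (nstar u + 1) := by
    rw [hg, hg, Finset.sum_range_succ]
  have hgt : g t (nstar t) = g t b + f t (nstar t) := by
    rw [hg, hg, hb, Finset.sum_range_succ, ← hb]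
  have hfu : f u (nstar u + 1) ≤ M :=
    le_trans (hmono u (by omega : nstar u + 1 ≤ m u)) (hmM u)
  have hdec : ∑ s, g s (n' s) < ∑ s, g s (nstar s) := by
    have e1 := key (α := ℝ) (fun s => g s (n' s))
    have e2 := key (α := ℝ) (fun s => g s (nstar s))
    rw [congr_rest (fun s k => g s k)] at e1
    rw [e1, e2, hn't, hn'u, hgu, hgt]
    have : f u (nstar u + 1) < f t (nstar t) := lt_of_le_of_lt hfu htM
    linarith
  exact absurd (hopt n' hsum'') (not_le.mpr hdec)
end

section
/- Let S be a finite set, α ≥ 1 a natural number, Λ : S → ℝ with Λ(s) > 0, and n : S → ℕ with n(s) ≥ 1 for all s. Let K satisfy α·|S| ≤ K < α·Σ_s n(s). Then the greedy algorithm that initializes f(s) = α for all s and at each remaining iteration adds one unit to some station s* with f(s*) < α·n(s*) maximizing Λ(s)/⌊f(s)/α⌋ (breaking ties in favor of stations with largest f(s) mod α) produces an allocation f : S → ℕ with α ≤ f(s) ≤ α·n(s) for all s, Σ_s f(s) = K, that minimizes max_{s∈S} Λ(s)/⌊f(s)/α⌋ over all g : S → ℕ with α ≤ g(s) ≤ α·n(s)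 for all s and Σ_s g(s) = K. -/
/-- Greedy crew allocation with tie-breaking by largest `f s % α`: the final
allocation is feasible and minimizes the maximal risk per operational vehicle. -/
theorem stmt4 {S : Type*} [Fintype S] [DecidableEq S] [Nonempty S] (Λ : S → ℝ) (hΛ : ∀ s, 0 < Λ s)
    (α : ℕ) (hα : 1 ≤ α) (n : S → ℕ) (hn : ∀ s, 1 ≤ n s)
    (K : ℕ) (hK1 : α * Fintype.card S ≤ K) (hK2 : K < α * ∑ s, n s)
    (f : ℕ → S → ℕ)
    (h0 : ∀ s, f 0 s = α)
    (hstep : ∀ k < K - α * Fintype.card S, ∃ sstar : S,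
      f k sstar < α * n sstar ∧
      (∀ s : S, f k s < α * n s →
        Λ s / ((f k s / α : ℕ) : ℝ) ≤ Λ sstar / ((f k sstar / α : ℕ) : ℝ)) ∧
      (∀ s : S, f k s < α * n s →
        Λ s / ((f k s / α : ℕ) : ℝ) = Λ sstar / ((f k sstar / α : ℕ) : ℝ) →
        f k s % α ≤ f k sstar % α) ∧
      f (k + 1) = Function.update (f k) sstar (f k sstar + 1)) :
    (∀ s, α ≤ f (K - α * Fintype.card S) s ∧ f (K - α * Fintype.card S) s ≤ α * n s) ∧
    (∑ s, f (K - α * Fintype.card S) s = K) ∧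
    (∀ g : S → ℕ, (∀ s, α ≤ g s ∧ g s ≤ α * n s) → ∑ s, g s = K →
      Finset.univ.sup' Finset.univ_nonempty
        (fun s => Λ s / ((f (K - α * Fintype.card S) s / α : ℕ) : ℝ)) ≤
      Finset.univ.sup' Finset.univ_nonempty (fun s => Λ s / ((g s / α : ℕ) : ℝ))) := by
  have hα0 : 0 < α := hα
  set N := K - α * Fintype.card S with hNdef
  -- feasibility invariant
  have feas : ∀ k, k ≤ N →
      (∀ s, α ≤ f k s ∧ f k s ≤ α * n s) ∧ ∑ s, f k s = α * Fintype.card S + k := by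
    intro k
    induction k with
    | zero =>
      intro _
      refine ⟨fun s => ?_, ?_⟩
      · rw [h0]
        exact ⟨le_refl _, Nat.le_mul_of_pos_right α (lt_of_lt_of_le one_pos (hn s))⟩
      · simp [h0, Finset.card_univ, mul_comm]
    | succ k ih =>
      intro hk
      have hkN : k < N := Nat.lt_of_succ_le hk
      obtain ⟨sstar, hlt, hmax, htie, hupd⟩ := hstep k hkN
      obtain ⟨hb, hsum⟩ := ih (le_of_lt hkN)
      refine ⟨fun s => ?_, ?_⟩
      · rw [hupd]
        by_cases hs : s = sstar
        · subst hs
          simp only [Function.update_self]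
          exact ⟨le_trans (hb s).1 (Nat.le_succ _), hlt⟩
        · rw [Function.update_of_ne hs]
          exact hb s
      · rw [hupd, Finset.sum_update_of_mem (Finset.mem_univ sstar)]
        have h2 := Finset.sum_erase_add Finset.univ (f k) (Finset.mem_univ sstar)
        rw [Finset.sdiff_singleton_eq_erase]
        omega
  -- monotonicity
  have mono : ∀ k, k ≤ N → ∀ j, j ≤ k → ∀ s, f j s ≤ f k s := by
    intro k
    induction k with
    | zero => intro _ j hj s; interval_cases j; exact le_refl _
    | succ k ih =>
      intro hk j hj s
      rcases Nat.lt_succ_iff_lt_or_eq.mp (Nat.lt_succ_of_le hj) with h | h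
      · have hkN : k < N := Nat.lt_of_succ_le hk
        obtain ⟨sstar, hlt, hmax, htie, hupd⟩ := hstep k hkN
        refine le_trans (ih (le_of_lt hkN) j (Nat.lt_succ_iff.mp h) s) ?_
        rw [hupd]
        by_cases hs : s = sstar
        · subst hs; simp
        · rw [Function.update_of_ne hs]
      · exact h ▸ le_refl _
  obtain ⟨hfeasN, hsumN⟩ := feas N le_rfl
  have hsumK : ∑ s, f N s = K := by rw [hsumN]; omega
  refine ⟨hfeasN, hsumK, ?_⟩
  intro g hg hgsum
  set M := Finset.univ.sup' Finset.univ_nonempty (fun s => Λ s / ((g s / α : ℕ) : ℝ)) with hMdef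
  by_contra hcon
  push_neg at hcon
  obtain ⟨s₀, -, hs₀⟩ := (Finset.lt_sup'_iff Finset.univ_nonempty).mp hcon
  -- the minimal operational counts
  set c : S → ℕ := fun s => sInf {m : ℕ | 1 ≤ m ∧ Λ s / (m : ℝ) ≤ M} with hcdef
  have hg1 : ∀ s, 1 ≤ g s / α := fun s => (Nat.one_le_div_iff hα0).mpr (hg s).1
  have hgmem : ∀ s, g s / α ∈ {m : ℕ | 1 ≤ m ∧ Λ s / (m : ℝ) ≤ M} := by
    intro s
    exact ⟨hg1 s, Finset.le_sup' (fun s => Λ s / ((g s / α : ℕ) : ℝ)) (Finset.mem_univ s)⟩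
  have hcmem : ∀ s, 1 ≤ c s ∧ Λ s / ((c s : ℕ) : ℝ) ≤ M := fun s => Nat.sInf_mem ⟨_, hgmem s⟩
  have hcle : ∀ s, c s ≤ g s / α := fun s => Nat.sInf_le (hgmem s)
  have hclt : ∀ (s : S) (m : ℕ), 1 ≤ m → M < Λ s / ((m : ℕ) : ℝ) → m < c s := by
    intro s m hm hM
    by_contra h
    push_neg at h
    have h1 : (0 : ℝ) < (c s : ℝ) := by exact_mod_cast (hcmem s).1
    have h2 : Λ s / (m : ℝ) ≤ Λ s / ((c s : ℕ) : ℝ) :=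
      div_le_div_of_nonneg_left (hΛ s).le h1 (by exact_mod_cast h)
    linarith [(hcmem s).2]
  -- properties of s₀
  have h1fN : ∀ s, 1 ≤ f N s / α := fun s => (Nat.one_le_div_iff hα0).mpr (hfeasN s).1
  have hfls₀ : f N s₀ / α < c s₀ := hclt s₀ _ (h1fN s₀) hs₀
  have hfNs₀ : f N s₀ < α * c s₀ := by
    have h := (Nat.div_lt_iff_lt_mul hα0).mp hfls₀
    rw [mul_comm] at h
    exact h
  have hcn : ∀ s, c s ≤ n s := by
    intro s
    refine le_trans (hcle s) ?_
    have : g s / α ≤ α * n s / α := Nat.div_le_div_right (hg s).2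
    rwa [Nat.mul_div_cancel_left _ hα0] at this
  have hs₀room : ∀ k, k ≤ N → f k s₀ < α * n s₀ := by
    intro k hk
    calc f k s₀ ≤ f N s₀ := mono N le_rfl k hk s₀
    _ < α * c s₀ := hfNs₀
    _ ≤ α * n s₀ := Nat.mul_le_mul_left α (hcn s₀)
  have hs₀ratio : ∀ k, k ≤ N → M < Λ s₀ / ((f k s₀ / α : ℕ) : ℝ) := by
    intro k hk
    have hdle : f k s₀ / α ≤ f N s₀ / α := Nat.div_le_div_right (mono N le_rfl k hk s₀)
    have h1 : (0 : ℝ) < ((f k s₀ / α : ℕ) : ℝ) := by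
      exact_mod_cast (Nat.one_le_div_iff hα0).mpr (le_trans ((feas k hk).1 s₀).1 (le_refl _) : α ≤ f k s₀)
    have : Λ s₀ / ((f N s₀ / α : ℕ) : ℝ) ≤ Λ s₀ / ((f k s₀ / α : ℕ) : ℝ) :=
      div_le_div_of_nonneg_left (hΛ s₀).le h1 (by exact_mod_cast hdle)
    linarith
  -- the key bound invariant
  have bound : ∀ k, k ≤ N → ∀ s, f k s ≤ α * c s := by
    intro k
    induction k with
    | zero =>
      intro _ s
      rw [h0]
      exact Nat.le_mul_of_pos_right α (hcmem s).1
    | succ k ih =>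
      intro hk s
      have hkN : k < N := Nat.lt_of_succ_le hk
      obtain ⟨sstar, hlt, hmax, htie, hupd⟩ := hstep k hkN
      rw [hupd]
      by_cases hs : s = sstar
      · subst hs
        simp only [Function.update_self]
        have hr : M < Λ s / ((f k s / α : ℕ) : ℝ) :=
          lt_of_lt_of_le (hs₀ratio k (le_of_lt hkN)) (hmax s₀ (hs₀room k (le_of_lt hkN)))
        have h1 : 1 ≤ f k s / α :=
          (Nat.one_le_div_iff hα0).mpr ((feas k (le_of_lt hkN)).1 s).1
        have := hclt s _ h1 hr
        have h3 := (Nat.div_lt_iff_lt_mul hα0).mp this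
        rw [mul_comm] at h3
        omega
      · rw [Function.update_of_ne hs]
        exact ih (le_of_lt hkN) s
  -- conclude
  have hle : ∀ s ∈ Finset.univ, f N s ≤ α * c s := fun s _ => bound N le_rfl s
  have hle2 : ∀ s, α * c s ≤ g s := by
    intro s
    calc α * c s ≤ α * (g s / α) := Nat.mul_le_mul_left α (hcle s)
    _ = g s / α * α := mul_comm _ _
    _ ≤ g s := Nat.div_mul_le_self _ _
  have hsums : ∑ s, f N s = ∑ s, α * c s := by
    have h1 : ∑ s, f N s ≤ ∑ s, α * c s := Finset.sum_le_sum hle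
    have h2 : ∑ s, α * c s ≤ ∑ s, g s := Finset.sum_le_sum fun s _ => hle2 s
    omega
  have heq : f N s₀ = α * c s₀ :=
    ((Finset.sum_eq_sum_iff_of_le hle).mp hsums) s₀ (Finset.mem_univ s₀)
  have : f N s₀ / α = c s₀ := by rw [heq, Nat.mul_div_cancel_left _ hα0]
  omega
end

section
/- Let S be a finite set, α ≥ 1, Λ : S → ℝ with Λ(s) > 0, and let f, f' : S → ℕ be such that α divides f(s) and f'(s) for all s, f(s), f'(s) ≥ α, and Σ_s f(s) = Σ_s f'(s). Suppose there exist s, s' ∈ S with f(s) > f'(s), f(s') < f'(s'), and Λ(s')·α/f(s') ≤ Λ(s)·α/(f(s) − α). Define f̂ by f̂(s) = f'(s) + α, f̂(s') = f'(s') − α, f̂(t) = f'(t) otherwise. Then max_{t∈S} Λ(t)/⌊f̂(t)/α⌋ ≤ max_{t∈S} Λ(t)/⌊f'(t)/α⌋. -/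
/-- Exchange step for crew allocation: moving a complete crew of size α from s' to s
in a competing allocation f' does not increase the maximal risk per vehicle. -/
theorem stmt7 {S : Type*} [Fintype S] [DecidableEq S] (α : ℕ) (hα : 1 ≤ α)
    (Λ : S → ℝ) (hΛ : ∀ s, 0 < Λ s)
    (f f' : S → ℕ) (hdvd : ∀ s, α ∣ f s) (hdvd' : ∀ s, α ∣ f' s)
    (hge : ∀ s, α ≤ f s) (hge' : ∀ s, α ≤ f' s)
    (hsum : ∑ s, f s = ∑ s, f' s)
    (s s' : S) (hs : f' s < f s) (hs' : f s' < f' s')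
    (hineq : Λ s' * α / (f s' : ℝ) ≤ Λ s * α / ((f s - α : ℕ) : ℝ)) :
    Finset.univ.sup' ⟨s, Finset.mem_univ s⟩
      (fun t => Λ t /
        (((Function.update (Function.update f' s (f' s + α)) s' (f' s' - α)) t / α : ℕ) : ℝ)) ≤
    Finset.univ.sup' ⟨s, Finset.mem_univ s⟩ (fun t => Λ t / ((f' t / α : ℕ) : ℝ)) := by
  have hα0 : 0 < α := hα
  have hαR : (0:ℝ) < α := by exact_mod_cast hα0
  have hαne : α ≠ 0 := hα0.ne'
  have hne : s ≠ s' := by rintro rfl; omega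
  -- multiples of α
  have hfs : f' s + α ≤ f s := by
    have h1 : α ∣ f s - f' s := Nat.dvd_sub (hdvd s) (hdvd' s)
    have h2 : α ≤ f s - f' s := Nat.le_of_dvd (by omega) h1
    omega
  have hfs' : f s' + α ≤ f' s' := by
    have h1 : α ∣ f' s' - f s' := Nat.dvd_sub (hdvd' s') (hdvd s')
    have h2 : α ≤ f' s' - f s' := Nat.le_of_dvd (by omega) h1
    omega
  have cast_div : ∀ n : ℕ, α ∣ n → ((n / α : ℕ) : ℝ) = (n : ℝ) / α := by
    intro n hn
    exact Nat.cast_div hn (by exact_mod_cast hαne)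
  apply Finset.sup'_le
  intro t _
  by_cases hts' : t = s'
  · subst hts'
    rw [Function.update_self]
    have hdd : α ∣ f' t - α := Nat.dvd_sub (hdvd' t) dvd_rfl
    rw [cast_div _ hdd]
    have hcast : ((f' t - α : ℕ) : ℝ) = (f' t : ℝ) - α := by
      have : α ≤ f' t := hge' t
      push_cast [this]; ring
    rw [hcast, div_div_eq_mul_div]
    refine le_trans ?_ (Finset.le_sup' (fun t => Λ t / ((f' t / α : ℕ) : ℝ))
      (Finset.mem_univ s))
    rw [cast_div _ (hdvd' s), div_div_eq_mul_div]
    have hft0 : (0:ℝ) < (f t : ℝ) := by exact_mod_cast lt_of_lt_of_le hα0 (hge t)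
    have hf's0 : (0:ℝ) < (f' s : ℝ) := by exact_mod_cast lt_of_lt_of_le hα0 (hge' s)
    calc Λ t * α / ((f' t : ℝ) - α)
        ≤ Λ t * α / (f t : ℝ) := by
          apply div_le_div_of_nonneg_left (mul_nonneg (hΛ t).le hαR.le) hft0
          have : (f t : ℝ) + α ≤ f' t := by exact_mod_cast hfs'
          linarith
      _ ≤ Λ s * α / ((f s - α : ℕ) : ℝ) := hineq
      _ ≤ Λ s * α / (f' s : ℝ) := by
          apply div_le_div_of_nonneg_left (mul_nonneg (hΛ s).le hαR.le) hf's0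
          have h1 : (f' s : ℝ) + α ≤ f s := by exact_mod_cast hfs
          have h2 : ((f s - α : ℕ) : ℝ) = (f s : ℝ) - α := by
            have : α ≤ f s := hge s
            push_cast [this]; ring
          rw [h2]; linarith
  · rw [Function.update_of_ne hts']
    by_cases hts : t = s
    · subst hts
      rw [Function.update_self]
      refine le_trans ?_ (Finset.le_sup' (fun t => Λ t / ((f' t / α : ℕ) : ℝ))
        (Finset.mem_univ t))
      rw [cast_div _ (hdvd' t), cast_div _ (Dvd.dvd.add (hdvd' t) dvd_rfl)]
      have hf's0 : (0:ℝ) < (f' t : ℝ) := by exact_mod_cast lt_of_lt_of_le hα0 (hge' t)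
      apply div_le_div_of_nonneg_left (hΛ t).le (by positivity)
      push_cast
      have : (0:ℝ) ≤ α := hαR.le
      apply div_le_div_of_nonneg_right ?_ hαR.le <;> linarith
    · rw [Function.update_of_ne hts]
      exact Finset.le_sup' (fun t => Λ t / ((f' t / α : ℕ) : ℝ)) (Finset.mem_univ t)
end

section
/- Let S be a finite set and f_s : ℕ → ℝ convex for each s ∈ S (first differences non-decreasing). Let n* : S → ℕ with Σ_s n*(s) = K. Suppose that for all s, s' ∈ S with n*(s') ≥ 1, one has f_s(n*(s)+1) − f_s(n*(s)) ≥ f_{s'}(n*(s')) − f_{s'}(n*(s')−1). Then n* minimizes Σ_{s∈S} f_s(n(s)) over all n : S → ℕ with Σ_s n(s) = K. -/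
/-- Local optimality (no improving single-unit exchange) implies global optimality
for the separable convex resource allocation problem. -/
theorem stmt11 {S : Type*} [Fintype S] (f : S → ℕ → ℝ)
    (hconv : ∀ s, ∀ i : ℕ, 1 ≤ i → f s i - f s (i - 1) ≤ f s (i + 1) - f s i)
    (K : ℕ) (nstar : S → ℕ) (hsum : ∑ s, nstar s = K)
    (hlocal : ∀ s s' : S, 1 ≤ nstar s' →
      f s' (nstar s') - f s' (nstar s' - 1) ≤ f s (nstar s + 1) - f s (nstar s)) :
    ∀ n : S → ℕ, ∑ s, n s = K → ∑ s, f s (nstar s) ≤ ∑ s, f s (n s) := by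
  intro n hn
  set d : S → ℕ → ℝ := fun s i => f s (i + 1) - f s i with hd
  have hmono : ∀ s, Monotone (d s) := by
    intro s
    apply monotone_nat_of_le_succ
    intro i
    have := hconv s (i + 1) (by omega)
    simpa [hd] using this
  have lb : ∀ (s : S) (a k : ℕ), (k : ℝ) * d s a ≤ f s (a + k) - f s a := by
    intro s a k
    induction k with
    | zero => simp
    | succ k ih =>
      have h1 : d s a ≤ d s (a + k) := hmono s (by omega)
      have heq : f s (a + (k + 1)) - f s a = d s (a + k) + (f s (a + k) - f s a) := by
        simp only [hd, show a + (k + 1) = a + k + 1 from rfl]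
        ring
      rw [heq]
      push_cast
      nlinarith
  have ub : ∀ s a k, f s (a + k) - f s a ≤ (k : ℝ) * d s (a + k - 1) := by
    intro s a k
    induction k with
    | zero => simp
    | succ k ih =>
      have heq : f s (a + (k + 1)) - f s a = d s (a + k) + (f s (a + k) - f s a) := by
        simp only [hd, show a + (k + 1) = a + k + 1 from rfl]
        ring
      rw [heq, show a + (k + 1) - 1 = a + k from by omega]
      have h1 : d s (a + k - 1) ≤ d s (a + k) := hmono s (by omega)
      push_cast
      nlinarith
  classical
  by_cases hT : (Finset.univ.filter fun s : S => 1 ≤ nstar s).Nonempty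
  · set lam : ℝ := (Finset.univ.filter fun s : S => 1 ≤ nstar s).sup' hT
      (fun s' => f s' (nstar s') - f s' (nstar s' - 1)) with hlam
    have hlam_le : ∀ s : S, lam ≤ d s (nstar s) := by
      intro s
      apply Finset.sup'_le
      intro s' hs'
      exact hlocal s s' (Finset.mem_filter.mp hs').2
    have hle_lam : ∀ s' : S, 1 ≤ nstar s' →
        f s' (nstar s') - f s' (nstar s' - 1) ≤ lam := by
      intro s' hs'
      exact Finset.le_sup' (fun s' => f s' (nstar s') - f s' (nstar s' - 1))
        (Finset.mem_filter.mpr ⟨Finset.mem_univ _, hs'⟩)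
    have key : ∀ s : S, f s (nstar s) + ((n s : ℝ) - (nstar s : ℝ)) * lam ≤ f s (n s) := by
      intro s
      rcases le_or_gt (nstar s) (n s) with h | h
      · obtain ⟨k, hk⟩ : ∃ k, n s = nstar s + k := ⟨n s - nstar s, by omega⟩
        have h1 := lb s (nstar s) k
        have h2 : (k : ℝ) * lam ≤ (k : ℝ) * d s (nstar s) :=
          mul_le_mul_of_nonneg_left (hlam_le s) (by positivity)
        rw [hk]
        push_cast
        nlinarith
      · obtain ⟨k, hk⟩ : ∃ k, nstar s = n s + k := ⟨nstar s - n s, by omega⟩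
        have hk1 : 1 ≤ k := by omega
        have h1 := ub s (n s) k
        have hds : d s (n s + k - 1) = f s (nstar s) - f s (nstar s - 1) := by
          simp only [hd, show n s + k - 1 = nstar s - 1 from by omega,
            show nstar s - 1 + 1 = nstar s from by omega]
        have h2 : d s (n s + k - 1) ≤ lam := by
          rw [hds]; exact hle_lam s (by omega)
        have h3 : (k : ℝ) * d s (n s + k - 1) ≤ (k : ℝ) * lam :=
          mul_le_mul_of_nonneg_left h2 (by positivity)
        rw [hk]
        push_cast
        nlinarith
    have hsum2 := Finset.sum_le_sum (fun s (_ : s ∈ Finset.univ) => key s)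
    have hzero : ∑ s : S, ((n s : ℝ) - (nstar s : ℝ)) = 0 := by
      rw [Finset.sum_sub_distrib, ← Nat.cast_sum, ← Nat.cast_sum, hn, hsum, sub_self]
    rw [Finset.sum_add_distrib, ← Finset.sum_mul, hzero, zero_mul, add_zero] at hsum2
    exact hsum2
  · have hzero : ∀ s : S, nstar s = 0 := by
      intro s
      by_contra h
      exact hT ⟨s, Finset.mem_filter.mpr ⟨Finset.mem_univ _, by omega⟩⟩
    have hK : K = 0 := by rw [← hsum]; simp [hzero]
    have hn0 : ∀ s : S, n s = 0 := by
      have := hn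
      rw [hK, Finset.sum_eq_zero_iff] at this
      exact fun s => this s (Finset.mem_univ s)
    simp [hzero, hn0]
end
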